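/- For a list S of n reals of which at most p have been arbitrarily corrupted from an honest list T (all honest values in [a,b]), the robust ADMM x-update x_i^{k+1} = (1/(1+2ρn))(ρ n x_i^k + ρ Γ_p(S) − α + c) differs from the honest update using Γ_p(T) by at most ρ·n·(b−a)/(1+2ρn) in absolute value. -/

import Mathlib

/-! After sorting, the at most `p` entries of `S` outside `[a, b]` can only occupy the first
`p` or the last `p` places, so the `n - 2p` middle entries all lie in `[a, b]`. `Γ_p` is `n` times
their mean, hence lies in `[n a, n b]` for `S` and `T` alike, and the two updates differ by
`ρ (Γ_p S - Γ_p T) / (1 + 2ρn)`. -/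

/-- Trimmed-sum operator `Γ_p`: sort, replace the `p` smallest and `p` largest entries by
the mean of the remaining `n - 2p` entries, and return the sum of the resulting list. -/
noncomputable def trimmedSum (p : ℕ) (l : List ℝ) : ℝ :=
  let s := l.mergeSort (· ≤ ·)
  let mid := (s.drop p).take (l.length - 2 * p)
  mid.sum + 2 * p * (mid.sum / (l.length - 2 * p))

open Finset

namespace List

section Sorted

variable {α : Type*} [LinearOrder α] {s : List α} {p : ℕ} {a x : α}

theorem Pairwise.le_of_mem_drop_of_countP_lt_le (hs : s.Pairwise (· ≤ ·))
    (hcount : s.countP (· < a) ≤ p) (hx : x ∈ s.drop p) : a ≤ x := by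
  by_contra! hxa
  have hp : p ≤ s.length := by
    have := length_pos_of_mem hx
    rw [length_drop] at this
    omega
  rw [← take_append_drop p s] at hs hcount
  have hhead : (s.take p).countP (· < a) = p := by
    rw [countP_eq_length.2, length_take_of_le hp]
    intro y hy
    exact decide_eq_true ((pairwise_append.1 hs).2.2 y hy x hx |>.trans_lt hxa)
  have htail : 0 < (s.drop p).countP (· < a) := countP_pos_iff.2 ⟨x, hx, decide_eq_true hxa⟩
  rw [countP_append] at hcount
  omega

theorem Pairwise.le_of_mem_take_of_countP_gt_le (hs : s.Pairwise (· ≤ ·))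
    (hcount : s.countP (a < ·) ≤ p) (hx : x ∈ s.take (s.length - p)) : x ≤ a := by
  by_contra! hax
  have hp : p ≤ s.length := by
    have := length_pos_of_mem hx
    rw [length_take] at this
    omega
  rw [← take_append_drop (s.length - p) s] at hs hcount
  have htail : (s.drop (s.length - p)).countP (a < ·) = p := by
    rw [countP_eq_length.2, length_drop]
    · omega
    intro y hy
    exact decide_eq_true (hax.trans_le ((pairwise_append.1 hs).2.2 x hx y hy))
  have hhead : 0 < (s.take (s.length - p)).countP (a < ·) :=
    countP_pos_iff.2 ⟨x, hx, decide_eq_true hax⟩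
  rw [countP_append] at hcount
  omega

end Sorted

theorem countP_eq_card_filter_get {α : Type*} (l : List α) (q : α → Prop) [DecidablePred q] :
    l.countP q = #{i : Fin l.length | q (l.get i)} := by
  rw [Finset.card, Finset.filter_val, ← Multiset.countP_map, Fin.univ_val_map, ofFn_get]
  simp

theorem sum_div_length_mem_Icc {K : Type*} [Field K] [LinearOrder K] [IsStrictOrderedRing K]
    {l : List K} {a b : K} (hl : l ≠ []) (h : ∀ x ∈ l, x ∈ Set.Icc a b) :
    l.sum / l.length ∈ Set.Icc a b := by
  have hlen : (0 : K) < l.length := by exact_mod_cast length_pos_of_ne_nil hl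
  constructor
  · rw [le_div_iff₀ hlen, mul_comm, ← nsmul_eq_mul]
    exact card_nsmul_le_sum l a fun x hx => (h x hx).1
  · rw [div_le_iff₀ hlen, mul_comm, ← nsmul_eq_mul]
    exact sum_le_card_nsmul l b fun x hx => (h x hx).2

theorem countP_le_card_filter_get_ne {α : Type*} [DecidableEq α] {l l' : List α}
    (hlen : l.length = l'.length) {q : α → Prop} [DecidablePred q] (hq : ∀ x ∈ l', ¬q x) :
    l.countP q ≤ #{i : Fin l.length | l.get i ≠ l'.get (Fin.cast hlen i)} := by
  rw [countP_eq_card_filter_get]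
  exact card_le_card <|
    Finset.monotone_filter_right _ fun i _ hi heq => hq _ (get_mem _ _) (heq ▸ hi)

end List

noncomputable def trimmedMiddle (p : ℕ) (l : List ℝ) : List ℝ :=
  ((l.mergeSort (· ≤ ·)).drop p).take (l.length - 2 * p)

section Trimmed

variable {p : ℕ} {l : List ℝ} {a b : ℝ}

theorem length_trimmedMiddle (hn : 2 * p < l.length) :
    (trimmedMiddle p l).length = l.length - 2 * p := by
  simp only [trimmedMiddle, List.length_take, List.length_drop, List.length_mergeSort]
  omega

theorem trimmedSum_eq_length_mul_mean (hn : 2 * p < l.length) :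
    trimmedSum p l = l.length * ((trimmedMiddle p l).sum / (trimmedMiddle p l).length) := by
  have hm : ((l.length - 2 * p : ℕ) : ℝ) = l.length - 2 * p := by push_cast [hn.le]; ring
  have hm_pos : (l.length : ℝ) - 2 * p ≠ 0 := by
    rw [← hm]; exact_mod_cast (Nat.sub_pos_of_lt hn).ne'
  rw [length_trimmedMiddle hn, hm, trimmedSum, ← trimmedMiddle]
  field_simp
  ring

theorem mem_Icc_of_mem_trimmedMiddle (hn : 2 * p < l.length)
    (hout : l.countP (· ∉ Set.Icc a b) ≤ p) {x : ℝ} (hx : x ∈ trimmedMiddle p l) :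
    x ∈ Set.Icc a b := by
  set s := l.mergeSort (· ≤ ·)
  have hs : s.Pairwise (· ≤ ·) := List.pairwise_mergeSort' _ l
  have hcount (q : ℝ → Prop) [DecidablePred q] (hq : ∀ y, q y → y ∉ Set.Icc a b) :
      s.countP q ≤ p := by
    rw [(List.mergeSort_perm l _).countP_eq]
    refine le_trans (List.countP_mono_left fun y _ hy => ?_) hout
    exact decide_eq_true (hq y (of_decide_eq_true hy))
  have hx_drop : x ∈ s.drop p := List.mem_of_mem_take hx
  have hx_take : x ∈ s.take (s.length - p) := by
    rw [trimmedMiddle, List.take_drop] at hx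
    rw [List.length_mergeSort, show l.length - p = p + (l.length - 2 * p) by omega]
    exact List.mem_of_mem_drop hx
  exact ⟨hs.le_of_mem_drop_of_countP_lt_le (hcount _ fun y hy h => hy.not_ge h.1) hx_drop,
    hs.le_of_mem_take_of_countP_gt_le (hcount _ fun y hy h => hy.not_ge h.2) hx_take⟩

theorem trimmedSum_mem_Icc (hn : 2 * p < l.length) (hout : l.countP (· ∉ Set.Icc a b) ≤ p) :
    trimmedSum p l ∈ Set.Icc (l.length * a) (l.length * b) := by
  have hne : trimmedMiddle p l ≠ [] := by
    rw [← List.length_pos_iff, length_trimmedMiddle hn]; omega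
  obtain ⟨hlo, hhi⟩ :=
    List.sum_div_length_mem_Icc hne fun x hx => mem_Icc_of_mem_trimmedMiddle hn hout hx
  rw [trimmedSum_eq_length_mul_mean hn]
  exact ⟨by gcongr, by gcongr⟩

end Trimmed

/-- the robust ADMM x-update using `Γ_p` on a list `S` with at most `p`
corrupted entries (honest list `T` with values in `[a,b]`) differs from the honest
update using `Γ_p(T)` by at most `ρ n (b-a)/(1+2ρn)`. -/
theorem robust_update_deviation_bound (p : ℕ) (a b : ℝ) (S T : List ℝ)
    (hlen : S.length = T.length) (hn : 2 * p < S.length)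
    (hdiff : (Finset.univ.filter
        (fun i : Fin S.length => S.get i ≠ T.get (Fin.cast hlen i))).card ≤ p)
    (honest : ∀ x ∈ T, a ≤ x ∧ x ≤ b)
    (ρ xik α c : ℝ) (hρ : 0 < ρ) :
    |(1 / (1 + 2 * ρ * S.length))
        * (ρ * S.length * xik + ρ * trimmedSum p S - α + c)
      - (1 / (1 + 2 * ρ * S.length))
          * (ρ * S.length * xik + ρ * trimmedSum p T - α + c)|
      ≤ ρ * S.length * (b - a) / (1 + 2 * ρ * S.length) := by
  have hout_S : S.countP (· ∉ Set.Icc a b) ≤ p :=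
    (List.countP_le_card_filter_get_ne hlen fun x hx h => h (honest x hx)).trans hdiff
  have hout_T : T.countP (· ∉ Set.Icc a b) ≤ p :=
    (List.countP_eq_zero.2 fun x hx => by simpa using honest x hx).trans_le p.zero_le
  have hΓS := trimmedSum_mem_Icc hn hout_S
  have hΓT := trimmedSum_mem_Icc (hlen ▸ hn) hout_T
  rw [← hlen] at hΓT
  have hΓ : |trimmedSum p S - trimmedSum p T| ≤ S.length * (b - a) := by
    simpa [mul_sub, Real.dist_eq] using Real.dist_le_of_mem_Icc hΓS hΓT
  have hd : 0 < 1 + 2 * ρ * S.length := by positivity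
  calc _ = |ρ * (trimmedSum p S - trimmedSum p T) / (1 + 2 * ρ * S.length)| := by
        congr 1; ring
    _ = ρ * |trimmedSum p S - trimmedSum p T| / (1 + 2 * ρ * S.length) := by
        rw [abs_div, abs_mul, abs_of_pos hρ, abs_of_pos hd]
    _ ≤ ρ * (S.length * (b - a)) / (1 + 2 * ρ * S.length) := by gcongr
    _ = ρ * S.length * (b - a) / (1 + 2 * ρ * S.length) := by ring
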